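/- arXiv:2101.07777 — 5 statements merged into one kernel-verified Lean document; each statement's English description precedes it below -/
import Mathlib

section
/- Let C be a symmetric monoidal category equipped with, for every object x, morphisms ∇_x : x ⊗ x ⟶ x and u_x : 𝟙_C ⟶ x such that: (i) every (x, ∇_x, u_x) is a commutative monoid object in C; (ii) ∇ and u are natural, i.e. for every f : x ⟶ y one has (f ⊗ f) ≫ ∇_y = ∇_x ≫ f and u_x ≫ f = u_y; (iii) ∇ and u are monoidal, i.e. ∇_{x⊗y} = tensorμ x y x y ≫ (∇_x ⊗ ∇_y) for all x, y, and u_{𝟙} = 𝟙_{𝟙_C}. Then the monoidal structure of C is cocartesian: the unit object 𝟙_C is initial, and for all objects x, y the cofan with legs (ρ_x).inv ≫ (𝟙_x ⊗ u_y) : x ⟶ x ⊗ y and (λ_y).inv ≫ (u_x ⊗ 𝟙_y) : y ⟶ x ⊗ y exhibits x ⊗ y as a binary coproduct of x and y. -/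
/-!
A natural unit `u` with `u (𝟙_ C) = 𝟙` makes `𝟙_ C` initial, since any `f : 𝟙_ C ⟶ x` equals
`u (𝟙_ C) ≫ f = u x`. For the coproduct, a pair `f : x ⟶ z`, `g : y ⟶ z` is copaired by
`(f ⊗ g) ≫ ∇ z`; the unit laws give the two factorizations. Uniqueness follows from the fact that
the copairing of the two coprojections themselves is `𝟙 (x ⊗ y)` (monoidality of `∇` plus the unit
laws), after which naturality of `∇` rewrites any `t : x ⊗ y ⟶ z` as the copairing of its
restrictions.
-/

open CategoryTheory MonoidalCategory Limits

namespace CategoryTheory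

def Limits.IsInitial.ofNaturalFamily {C : Type*} [Category C] {i : C} (u : ∀ x : C, i ⟶ x)
    (hu : ∀ {x y : C} (f : x ⟶ y), u x ≫ f = u y) (hi : u i = 𝟙 i) : IsInitial i :=
  IsInitial.ofUniqueHom u fun x f => by rw [← Category.id_comp f, ← hi, hu f]

section

variable {C : Type*} [Category C] [MonoidalCategory C]

theorem tensorμ_unitors_eq_id [BraidedCategory C] (x y : C) :
    ((ρ_ x).inv ⊗ₘ (λ_ y).inv) ≫ tensorμ x (𝟙_ C) (𝟙_ C) y ≫ ((ρ_ x).hom ⊗ₘ (λ_ y).hom) =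
      𝟙 (x ⊗ y) := by
  simp only [tensorμ, braiding_tensorUnit_left]
  monoidal

variable (m : ∀ x : C, x ⊗ x ⟶ x) (u : ∀ x : C, 𝟙_ C ⟶ x)

theorem rightUnitor_inv_comp_tensorHom_comp {x y z : C} (f : x ⟶ z) (g : y ⟶ z)
    (hg : u y ≫ g = u z) (h_right_unit : (𝟙 z ⊗ₘ u z) ≫ m z = (ρ_ z).hom) :
    ((ρ_ x).inv ≫ (𝟙 x ⊗ₘ u y)) ≫ (f ⊗ₘ g) ≫ m z = f := by
  rw [Category.assoc, tensorHom_comp_tensorHom_assoc, Category.id_comp, hg,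
    ← Category.comp_id f, ← Category.id_comp (u z), ← tensorHom_comp_tensorHom_assoc,
    h_right_unit]
  simp

theorem leftUnitor_inv_comp_tensorHom_comp {x y z : C} (f : x ⟶ z) (g : y ⟶ z)
    (hf : u x ≫ f = u z) (h_left_unit : (u z ⊗ₘ 𝟙 z) ≫ m z = (λ_ z).hom) :
    ((λ_ y).inv ≫ (u x ⊗ₘ 𝟙 y)) ≫ (f ⊗ₘ g) ≫ m z = g := by
  rw [Category.assoc, tensorHom_comp_tensorHom_assoc, Category.id_comp, hf,
    ← Category.comp_id g, ← Category.id_comp (u z), ← tensorHom_comp_tensorHom_assoc,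
    h_left_unit]
  simp

theorem tensorHom_coprojections_comp_mul [BraidedCategory C] (x y : C)
    (h_left_unit : (u y ⊗ₘ 𝟙 y) ≫ m y = (λ_ y).hom)
    (h_right_unit : (𝟙 x ⊗ₘ u x) ≫ m x = (ρ_ x).hom)
    (h_mon_m : m (x ⊗ y) = tensorμ x y x y ≫ (m x ⊗ₘ m y)) :
    (((ρ_ x).inv ≫ (𝟙 x ⊗ₘ u y)) ⊗ₘ ((λ_ y).inv ≫ (u x ⊗ₘ 𝟙 y))) ≫ m (x ⊗ y) = 𝟙 (x ⊗ y) := by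
  rw [h_mon_m, ← tensorHom_comp_tensorHom, Category.assoc, tensorμ_natural_assoc,
    tensorHom_comp_tensorHom, h_right_unit, h_left_unit, tensorμ_unitors_eq_id]

def isColimitBinaryCofanOfNaturalMonoid [BraidedCategory C] (x y : C)
    (h_left_unit : ∀ x : C, (u x ⊗ₘ 𝟙 x) ≫ m x = (λ_ x).hom)
    (h_right_unit : ∀ x : C, (𝟙 x ⊗ₘ u x) ≫ m x = (ρ_ x).hom)
    (h_nat_m : ∀ {x y : C} (f : x ⟶ y), (f ⊗ₘ f) ≫ m y = m x ≫ f)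
    (h_nat_u : ∀ {x y : C} (f : x ⟶ y), u x ≫ f = u y)
    (h_mon_m : m (x ⊗ y) = tensorμ x y x y ≫ (m x ⊗ₘ m y)) :
    IsColimit (BinaryCofan.mk ((ρ_ x).inv ≫ (𝟙 x ⊗ₘ u y)) ((λ_ y).inv ≫ (u x ⊗ₘ 𝟙 y))) :=
  BinaryCofan.isColimitMk (fun s => (s.inl ⊗ₘ s.inr) ≫ m s.pt)
    (fun s => rightUnitor_inv_comp_tensorHom_comp m u _ _ (h_nat_u _) (h_right_unit _))
    (fun s => leftUnitor_inv_comp_tensorHom_comp m u _ _ (h_nat_u _) (h_left_unit _))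
    fun s t h₁ h₂ => by
      rw [← h₁, ← h₂, ← tensorHom_comp_tensorHom, Category.assoc, h_nat_m t,
        ← Category.assoc, tensorHom_coprojections_comp_mul m u x y (h_left_unit y)
          (h_right_unit x) h_mon_m, Category.id_comp]

end

end CategoryTheory

theorem cocartesian_of_natural_monoid_structures_general {C : Type*} [Category C] [MonoidalCategory C]
    [SymmetricCategory C]
    (m : ∀ x : C, x ⊗ x ⟶ x) (u : ∀ x : C, 𝟙_ C ⟶ x)
    (h_left_unit : ∀ x : C, (u x ⊗ₘ 𝟙 x) ≫ m x = (λ_ x).hom)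
    (h_right_unit : ∀ x : C, (𝟙 x ⊗ₘ u x) ≫ m x = (ρ_ x).hom)
    (h_nat_m : ∀ {x y : C} (f : x ⟶ y), (f ⊗ₘ f) ≫ m y = m x ≫ f)
    (h_nat_u : ∀ {x y : C} (f : x ⟶ y), u x ≫ f = u y)
    (h_mon_m : ∀ x y : C, m (x ⊗ y) = tensorμ x y x y ≫ (m x ⊗ₘ m y))
    (h_mon_u : u (𝟙_ C) = 𝟙 (𝟙_ C)) :
    Nonempty (IsInitial (𝟙_ C)) ∧
      ∀ x y : C, Nonempty (IsColimit (BinaryCofan.mk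
        ((ρ_ x).inv ≫ (𝟙 x ⊗ₘ u y)) ((λ_ y).inv ≫ (u x ⊗ₘ 𝟙 y)))) :=
  ⟨⟨IsInitial.ofNaturalFamily u h_nat_u h_mon_u⟩, fun x y =>
    ⟨isColimitBinaryCofanOfNaturalMonoid m u x y h_left_unit h_right_unit h_nat_m h_nat_u
      (h_mon_m x y)⟩⟩

/-- If a symmetric monoidal category `C` is equipped with a natural, monoidal family of
commutative monoid structures `(∇ x : x ⊗ x ⟶ x, u x : 𝟙_ C ⟶ x)` on every object `x`, then the
monoidal structure of `C` is cocartesian: the unit object is initial and, for all objects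
`x, y`, the cofan with legs `(ρ_ x).inv ≫ (𝟙 x ⊗ u y)` and `(λ_ y).inv ≫ (u x ⊗ 𝟙 y)` exhibits
`x ⊗ y` as a binary coproduct of `x` and `y`. -/
theorem cocartesian_of_natural_monoid_structures {C : Type*} [Category C] [MonoidalCategory C]
    [SymmetricCategory C]
    (m : ∀ x : C, x ⊗ x ⟶ x) (u : ∀ x : C, 𝟙_ C ⟶ x)
    (h_assoc : ∀ x : C, (m x ⊗ₘ 𝟙 x) ≫ m x = (α_ x x x).hom ≫ (𝟙 x ⊗ₘ m x) ≫ m x)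
    (h_left_unit : ∀ x : C, (u x ⊗ₘ 𝟙 x) ≫ m x = (λ_ x).hom)
    (h_right_unit : ∀ x : C, (𝟙 x ⊗ₘ u x) ≫ m x = (ρ_ x).hom)
    (h_comm : ∀ x : C, (β_ x x).hom ≫ m x = m x)
    (h_nat_m : ∀ {x y : C} (f : x ⟶ y), (f ⊗ₘ f) ≫ m y = m x ≫ f)
    (h_nat_u : ∀ {x y : C} (f : x ⟶ y), u x ≫ f = u y)
    (h_mon_m : ∀ x y : C, m (x ⊗ y) = tensorμ x y x y ≫ (m x ⊗ₘ m y))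
    (h_mon_u : u (𝟙_ C) = 𝟙 (𝟙_ C)) :
    Nonempty (IsInitial (𝟙_ C)) ∧
      ∀ x y : C, Nonempty (IsColimit (BinaryCofan.mk
        ((ρ_ x).inv ≫ (𝟙 x ⊗ₘ u y)) ((λ_ y).inv ≫ (u x ⊗ₘ 𝟙 y)))) :=
  cocartesian_of_natural_monoid_structures_general m u h_left_unit h_right_unit h_nat_m h_nat_u
    h_mon_m h_mon_u
end

section
/- Let C be a symmetric monoidal category equipped with, for every object x, morphisms Δ_x : x ⟶ x ⊗ x and e_x : x ⟶ 𝟙_C such that: (i) every (x, Δ_x, e_x) is a cocommutative comonoid object in C; (ii) Δ and e are natural, i.e. for every f : x ⟶ y one has Δ_x ≫ (f ⊗ f) = f ≫ Δ_y and f ≫ e_y = e_x; (iii) Δ and e are monoidal, i.e. Δ_{x⊗y} = (Δ_x ⊗ Δ_y) ≫ tensorμ x x y y for all x, y, and e_{𝟙} = 𝟙_{𝟙_C}. Then the monoidal structure of C is cartesian: the unit object 𝟙_C is terminal, and for all objects x, y the fan with legs (𝟙_x ⊗ e_y) ≫ (ρ_x).hom : x ⊗ y ⟶ x and (e_x ⊗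 𝟙_y) ≫ (λ_y).hom : x ⊗ y ⟶ y exhibits x ⊗ y as a binary product of x and y. -/
/-!
Naturality of `e` and `e 𝟙 = 𝟙` force every morphism into `𝟙_ C` to be a counit, so the unit is
terminal. For a cone `(f, g)` with apex `z`, the map `d z ≫ (f ⊗ g)` is a lift: naturality of `e`
turns either projection of it into a counit law at `z`. Uniqueness comes from the identity
`d (x ⊗ y) ≫ (fst ⊗ snd) = 𝟙`, which is where monoidality of `d` enters: any lift `m` then equals
`m ≫ d (x ⊗ y) ≫ (fst ⊗ snd) = d z ≫ (m ≫ fst ⊗ m ≫ snd)` by naturality of `d`.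
-/

open CategoryTheory MonoidalCategory Limits

def isTerminalOfNaturalHoms {C : Type*} [Category C] {t : C} (e : ∀ x : C, x ⟶ t)
    (h_nat : ∀ {x y : C} (f : x ⟶ y), f ≫ e y = e x) (h_t : e t = 𝟙 t) : IsTerminal t :=
  IsTerminal.ofUniqueHom e fun _ f => by rw [← h_nat f, h_t, Category.comp_id]

lemma tensorμ_comp_rightUnitor_tensorHom_leftUnitor {C : Type*} [Category C]
    [MonoidalCategory C] [BraidedCategory C] (x y : C) :
    tensorμ x (𝟙_ C) (𝟙_ C) y ≫ ((ρ_ x).hom ⊗ₘ (λ_ y).hom) = (ρ_ x).hom ⊗ₘ (λ_ y).hom := by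
  dsimp only [tensorμ]
  rw [braiding_tensorUnit_left]
  monoidal

section Counit

variable {C : Type*} [Category C] [MonoidalCategory C] (e : ∀ x : C, x ⟶ 𝟙_ C)

def counitFst (x y : C) : x ⊗ y ⟶ x := (𝟙 x ⊗ₘ e y) ≫ (ρ_ x).hom

def counitSnd (x y : C) : x ⊗ y ⟶ y := (e x ⊗ₘ 𝟙 y) ≫ (λ_ y).hom

variable {e}

lemma comp_tensorHom_comp_counitFst {x y z : C} {δ : z ⟶ z ⊗ z}
    (hδ : δ ≫ (𝟙 z ⊗ₘ e z) = (ρ_ z).inv) (f : z ⟶ x) {g : z ⟶ y} (hg : g ≫ e y = e z) :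
    δ ≫ (f ⊗ₘ g) ≫ counitFst e x y = f := by
  have : (f ⊗ₘ g) ≫ (𝟙 x ⊗ₘ e y) = (𝟙 z ⊗ₘ e z) ≫ (f ⊗ₘ 𝟙 (𝟙_ C)) := by
    simp only [tensorHom_comp_tensorHom, Category.comp_id, Category.id_comp, hg]
  rw [counitFst, reassoc_of% this, reassoc_of% hδ]
  simp

lemma comp_tensorHom_comp_counitSnd {x y z : C} {δ : z ⟶ z ⊗ z}
    (hδ : δ ≫ (e z ⊗ₘ 𝟙 z) = (λ_ z).inv) {f : z ⟶ x} (hf : f ≫ e x = e z) (g : z ⟶ y) :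
    δ ≫ (f ⊗ₘ g) ≫ counitSnd e x y = g := by
  have : (f ⊗ₘ g) ≫ (e x ⊗ₘ 𝟙 y) = (e z ⊗ₘ 𝟙 z) ≫ (𝟙 (𝟙_ C) ⊗ₘ g) := by
    simp only [tensorHom_comp_tensorHom, Category.comp_id, Category.id_comp, hf]
  rw [counitSnd, reassoc_of% this, reassoc_of% hδ]
  simp

lemma comul_comp_counitFst_tensorHom_counitSnd [BraidedCategory C] (d : ∀ x : C, x ⟶ x ⊗ x)
    (h_left_counit : ∀ x : C, d x ≫ (e x ⊗ₘ 𝟙 x) = (λ_ x).inv)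
    (h_right_counit : ∀ x : C, d x ≫ (𝟙 x ⊗ₘ e x) = (ρ_ x).inv) {x y : C}
    (h_mon_d : d (x ⊗ y) = (d x ⊗ₘ d y) ≫ tensorμ x x y y) :
    d (x ⊗ y) ≫ (counitFst e x y ⊗ₘ counitSnd e x y) = 𝟙 (x ⊗ y) := by
  rw [counitFst, counitSnd, h_mon_d, Category.assoc, ← tensorHom_comp_tensorHom,
    ← tensorμ_natural_assoc (𝟙 x) (e x) (e y) (𝟙 y),
    tensorμ_comp_rightUnitor_tensorHom_leftUnitor, tensorHom_comp_tensorHom_assoc,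
    h_right_counit, h_left_counit, tensorHom_comp_tensorHom, Iso.inv_hom_id, Iso.inv_hom_id,
    id_tensorHom_id]

lemma eq_comul_comp_tensorHom_of_counitFst_of_counitSnd [BraidedCategory C]
    (d : ∀ x : C, x ⟶ x ⊗ x) (h_left_counit : ∀ x : C, d x ≫ (e x ⊗ₘ 𝟙 x) = (λ_ x).inv)
    (h_right_counit : ∀ x : C, d x ≫ (𝟙 x ⊗ₘ e x) = (ρ_ x).inv)
    (h_nat_d : ∀ {x y : C} (f : x ⟶ y), d x ≫ (f ⊗ₘ f) = f ≫ d y) {x y z : C}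
    (h_mon_d : d (x ⊗ y) = (d x ⊗ₘ d y) ≫ tensorμ x x y y) {f : z ⟶ x} {g : z ⟶ y}
    {m : z ⟶ x ⊗ y} (hf : m ≫ counitFst e x y = f) (hg : m ≫ counitSnd e x y = g) :
    m = d z ≫ (f ⊗ₘ g) :=
  calc m = m ≫ d (x ⊗ y) ≫ (counitFst e x y ⊗ₘ counitSnd e x y) := by
        rw [comul_comp_counitFst_tensorHom_counitSnd d h_left_counit h_right_counit h_mon_d,
          Category.comp_id]
    _ = d z ≫ ((m ≫ counitFst e x y) ⊗ₘ (m ≫ counitSnd e x y)) := by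
        rw [← Category.assoc, ← h_nat_d m, Category.assoc, tensorHom_comp_tensorHom]
    _ = d z ≫ (f ⊗ₘ g) := by rw [hf, hg]

def isLimitBinaryFanCounit [BraidedCategory C] (d : ∀ x : C, x ⟶ x ⊗ x)
    (h_left_counit : ∀ x : C, d x ≫ (e x ⊗ₘ 𝟙 x) = (λ_ x).inv)
    (h_right_counit : ∀ x : C, d x ≫ (𝟙 x ⊗ₘ e x) = (ρ_ x).inv)
    (h_nat_d : ∀ {x y : C} (f : x ⟶ y), d x ≫ (f ⊗ₘ f) = f ≫ d y)
    (h_nat_e : ∀ {x y : C} (f : x ⟶ y), f ≫ e y = e x) {x y : C}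
    (h_mon_d : d (x ⊗ y) = (d x ⊗ₘ d y) ≫ tensorμ x x y y) :
    IsLimit (BinaryFan.mk (counitFst e x y) (counitSnd e x y)) :=
  BinaryFan.isLimitMk (fun s => d s.pt ≫ (s.fst ⊗ₘ s.snd))
    (fun s => by
      rw [Category.assoc]
      exact comp_tensorHom_comp_counitFst (h_right_counit _) _ (h_nat_e _))
    (fun s => by
      rw [Category.assoc]
      exact comp_tensorHom_comp_counitSnd (h_left_counit _) (h_nat_e _) _)
    (fun s m h_fst h_snd =>
      eq_comul_comp_tensorHom_of_counitFst_of_counitSnd d h_left_counit h_right_counit h_nat_d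
        h_mon_d h_fst h_snd)

end Counit

theorem cartesian_of_natural_comonoid_structures_general {C : Type*} [Category C] [MonoidalCategory C]
    [SymmetricCategory C]
    (d : ∀ x : C, x ⟶ x ⊗ x) (e : ∀ x : C, x ⟶ 𝟙_ C)
    (h_left_counit : ∀ x : C, d x ≫ (e x ⊗ₘ 𝟙 x) = (λ_ x).inv)
    (h_right_counit : ∀ x : C, d x ≫ (𝟙 x ⊗ₘ e x) = (ρ_ x).inv)
    (h_nat_d : ∀ {x y : C} (f : x ⟶ y), d x ≫ (f ⊗ₘ f) = f ≫ d y)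
    (h_nat_e : ∀ {x y : C} (f : x ⟶ y), f ≫ e y = e x)
    (h_mon_d : ∀ x y : C, d (x ⊗ y) = (d x ⊗ₘ d y) ≫ tensorμ x x y y)
    (h_mon_e : e (𝟙_ C) = 𝟙 (𝟙_ C)) :
    Nonempty (IsTerminal (𝟙_ C)) ∧
      ∀ x y : C, Nonempty (IsLimit (BinaryFan.mk
        ((𝟙 x ⊗ₘ e y) ≫ (ρ_ x).hom) ((e x ⊗ₘ 𝟙 y) ≫ (λ_ y).hom))) :=
  ⟨⟨isTerminalOfNaturalHoms e h_nat_e h_mon_e⟩, fun x y =>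
    ⟨isLimitBinaryFanCounit d h_left_counit h_right_counit h_nat_d h_nat_e (h_mon_d x y)⟩⟩

/-- If a symmetric monoidal category `C` is equipped with a natural, monoidal family of
cocommutative comonoid structures `(Δ x : x ⟶ x ⊗ x, e x : x ⟶ 𝟙_ C)` on every object `x`, then
the monoidal structure of `C` is cartesian: the unit object is terminal and, for all objects
`x, y`, the fan with legs `(𝟙 x ⊗ e y) ≫ (ρ_ x).hom` and `(e x ⊗ 𝟙 y) ≫ (λ_ y).hom` exhibits
`x ⊗ y` as a binary product of `x` and `y`. -/
theorem cartesian_of_natural_comonoid_structures {C : Type*} [Category C] [MonoidalCategory C]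
    [SymmetricCategory C]
    (d : ∀ x : C, x ⟶ x ⊗ x) (e : ∀ x : C, x ⟶ 𝟙_ C)
    (h_coassoc : ∀ x : C, d x ≫ (d x ⊗ₘ 𝟙 x) ≫ (α_ x x x).hom = d x ≫ (𝟙 x ⊗ₘ d x))
    (h_left_counit : ∀ x : C, d x ≫ (e x ⊗ₘ 𝟙 x) = (λ_ x).inv)
    (h_right_counit : ∀ x : C, d x ≫ (𝟙 x ⊗ₘ e x) = (ρ_ x).inv)
    (h_cocomm : ∀ x : C, d x ≫ (β_ x x).hom = d x)
    (h_nat_d : ∀ {x y : C} (f : x ⟶ y), d x ≫ (f ⊗ₘ f) = f ≫ d y)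
    (h_nat_e : ∀ {x y : C} (f : x ⟶ y), f ≫ e y = e x)
    (h_mon_d : ∀ x y : C, d (x ⊗ y) = (d x ⊗ₘ d y) ≫ tensorμ x x y y)
    (h_mon_e : e (𝟙_ C) = 𝟙 (𝟙_ C)) :
    Nonempty (IsTerminal (𝟙_ C)) ∧
      ∀ x y : C, Nonempty (IsLimit (BinaryFan.mk
        ((𝟙 x ⊗ₘ e y) ≫ (ρ_ x).hom) ((e x ⊗ₘ 𝟙 y) ≫ (λ_ y).hom))) :=
  cartesian_of_natural_comonoid_structures_general d e h_left_counit h_right_counit h_nat_d h_nat_e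
    h_mon_d h_mon_e
end

section
/- Let X be a category with finite coproducts, regarded as a monoidal category under binary coproduct with unit the initial object, and let F : X ⥤ Cat be a functor equipped with a lax monoidal structure (with Cat carrying its cartesian monoidal structure). Then the induced tensor product on each fibre is strictly associative: for every object x of X and all objects a, b, c of F(x), (a ⊗ₓ b) ⊗ₓ c = a ⊗ₓ (b ⊗ₓ c). -/
/-! Both bracketings are obtained from the ternary laxator by applying `F` to a codiagonal map
`x ⨿ x ⨿ x ⟶ x`: naturality of `μ` pushes the inner `∇_x` outwards, so `(a ⊗ b) ⊗ c` is the image of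
`μ(μ(a, b), c)` under `(∇_x ⨿ 1) ≫ ∇_x` and `a ⊗ (b ⊗ c)` that of `μ(a, μ(b, c))` under
`(1 ⨿ ∇_x) ≫ ∇_x`. These two maps differ by the coproduct associator, which the lax associativity
axiom transports from one ternary laxator to the other. -/

open CategoryTheory CategoryTheory.Limits

universe w z v u

variable {X : Type u} [Category.{v} X] [HasFiniteCoproducts X]

/-- A lax monoidal structure on a functor `F : X ⥤ Cat`, where `X` carries the cocartesian
monoidal structure given by binary coproducts with unit an initial object, and `Cat` carries
its cartesian monoidal structure.  It consists of laxator functors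
`μ x y : F(x) × F(y) ⥤ F(x ⨿ y)`, natural in `x` and `y`, and a unit functor
`ε : 𝟙_Cat ⥤ F(⊥)` from the terminal category, satisfying the lax associativity and unit
axioms. -/
structure CoprodLaxMonoidalStructure (F : X ⥤ Cat.{w, z}) where
  /-- The laxator. -/
  μ : ∀ x y : X, (↑(F.obj x) × ↑(F.obj y)) ⥤ ↑(F.obj (x ⨿ y))
  /-- The unit laxator, a functor from the terminal category. -/
  ε : Discrete PUnit.{1} ⥤ ↑(F.obj (⊥_ X))
  /-- Naturality of the laxator in both variables. -/
  naturality : ∀ {x x' y y' : X} (f : x ⟶ x') (g : y ⟶ y'),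
    (F.map f).toFunctor.prod (F.map g).toFunctor ⋙ μ x' y' = μ x y ⋙ (F.map (coprod.map f g)).toFunctor
  /-- The lax associativity axiom. -/
  associativity : ∀ x y z : X,
    (μ x y).prod (𝟭 ↑(F.obj z)) ⋙ μ (x ⨿ y) z ⋙ (F.map (coprod.associator x y z).hom).toFunctor
      = prod.associator ↑(F.obj x) ↑(F.obj y) ↑(F.obj z) ⋙
          (𝟭 ↑(F.obj x)).prod (μ y z) ⋙ μ x (y ⨿ z)
  /-- The lax left unit axiom. -/
  left_unitality : ∀ x : X,
    Prod.sectR (ε.obj ⟨PUnit.unit⟩) ↑(F.obj x) ⋙ μ (⊥_ X) x ⋙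
        (F.map (coprod.desc (initial.to x) (𝟙 x))).toFunctor
      = 𝟭 ↑(F.obj x)
  /-- The lax right unit axiom. -/
  right_unitality : ∀ x : X,
    Prod.sectL ↑(F.obj x) (ε.obj ⟨PUnit.unit⟩) ⋙ μ x (⊥_ X) ⋙
        (F.map (coprod.desc (𝟙 x) (initial.to x))).toFunctor
      = 𝟭 ↑(F.obj x)

/-- The fibrewise tensor product induced on the fibre `F(x)` by a lax monoidal structure on
`F : X ⥤ Cat`:  `a ⊗ₓ b = F(∇_x)(μ x x (a, b))`, where `∇_x : x ⨿ x ⟶ x` is the codiagonal. -/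
noncomputable def fibTensor (F : X ⥤ Cat.{w, z}) (L : CoprodLaxMonoidalStructure F) {x : X}
    (a b : ↑(F.obj x)) : ↑(F.obj x) :=
  (F.map (codiag x)).toFunctor.obj ((L.μ x x).obj (a, b))

/-- The fibrewise unit induced on the fibre `F(x)` by a lax monoidal structure on `F : X ⥤ Cat`:
`I_x = F(i_x)(ε(⋆))`, where `i_x : ⊥ ⟶ x` is the unique map from the initial object. -/
noncomputable def fibUnit (F : X ⥤ Cat.{w, z}) (L : CoprodLaxMonoidalStructure F) (x : X) : ↑(F.obj x) :=
  (F.map (initial.to x)).toFunctor.obj (L.ε.obj ⟨PUnit.unit⟩)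

theorem CategoryTheory.Limits.coprod.map_codiag_comp_codiag {C : Type*} [Category C]
    [HasBinaryCoproducts C] (x : C) :
    coprod.map (codiag x) (𝟙 x) ≫ codiag x
      = (coprod.associator x x x).hom ≫ coprod.map (𝟙 x) (codiag x) ≫ codiag x := by
  ext <;> simp only [coprod.inl_desc, coprod.inr_desc, coprod.associator_hom,
    coprod.inl_map_assoc, coprod.inr_map_assoc, Category.assoc, Category.id_comp,
    coprod.desc_comp, codiag]

namespace CoprodLaxMonoidalStructure

variable {F : X ⥤ Cat.{w, z}} (L : CoprodLaxMonoidalStructure F)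

theorem map_coprodMap_μ_obj {x x' y y' : X} (f : x ⟶ x') (g : y ⟶ y') (a : F.obj x)
    (b : F.obj y) :
    (F.map (coprod.map f g)).toFunctor.obj ((L.μ x y).obj (a, b))
      = (L.μ x' y').obj ((F.map f).toFunctor.obj a, (F.map g).toFunctor.obj b) :=
  (Functor.congr_obj (L.naturality f g) (a, b)).symm

theorem map_associator_μ_obj {x y z : X} (a : F.obj x) (b : F.obj y) (c : F.obj z) :
    (F.map (coprod.associator x y z).hom).toFunctor.obj
        ((L.μ (x ⨿ y) z).obj ((L.μ x y).obj (a, b), c))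
      = (L.μ x (y ⨿ z)).obj (a, (L.μ y z).obj (b, c)) :=
  Functor.congr_obj (L.associativity x y z) ((a, b), c)

end CoprodLaxMonoidalStructure

section

variable {F : X ⥤ Cat.{w, z}} (L : CoprodLaxMonoidalStructure F) {x : X}

theorem fibTensor_fibTensor_left (a b c : F.obj x) :
    fibTensor F L (fibTensor F L a b) c
      = (F.map (coprod.map (codiag x) (𝟙 x) ≫ codiag x)).toFunctor.obj
          ((L.μ (x ⨿ x) x).obj ((L.μ x x).obj (a, b), c)) := by
  simp only [fibTensor]
  rw [Functor.map_comp, Cat.Hom.comp_obj, L.map_coprodMap_μ_obj, F.map_id, Cat.Hom.id_obj]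

theorem fibTensor_fibTensor_right (a b c : F.obj x) :
    fibTensor F L a (fibTensor F L b c)
      = (F.map (coprod.map (𝟙 x) (codiag x) ≫ codiag x)).toFunctor.obj
          ((L.μ x (x ⨿ x)).obj (a, (L.μ x x).obj (b, c))) := by
  simp only [fibTensor]
  rw [Functor.map_comp, Cat.Hom.comp_obj, L.map_coprodMap_μ_obj, F.map_id, Cat.Hom.id_obj]

end

/-- **Strict associativity of the fibrewise tensor product.**
For a functor `F : X ⥤ Cat` from a category with finite coproducts, equipped with a lax
monoidal structure with respect to the cocartesian monoidal structure on `X` and the cartesian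
monoidal structure on `Cat`, the induced tensor product on each fibre is strictly associative:
`(a ⊗ₓ b) ⊗ₓ c = a ⊗ₓ (b ⊗ₓ c)`. -/
theorem fibTensor_assoc (F : X ⥤ Cat.{w, z}) (L : CoprodLaxMonoidalStructure F) (x : X)
    (a b c : ↑(F.obj x)) :
    fibTensor F L (fibTensor F L a b) c = fibTensor F L a (fibTensor F L b c) := by
  rw [fibTensor_fibTensor_left, fibTensor_fibTensor_right, coprod.map_codiag_comp_codiag,
    Functor.map_comp, Cat.Hom.comp_obj, L.map_associator_μ_obj]
end

section
/- Let X be a category with finite coproducts, regarded as a monoidal category under binary coproduct with unit the initial object, and let F : X ⥤ Cat be a functor equipped with a lax monoidal structure (with Cat carrying its cartesian monoidal structure). Then the induced tensor product on each fibre is strictly unital: for every object x of X and every object a of F(x), I_x ⊗ₓ a = a and a ⊗ₓ I_x = a. -/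
open CategoryTheory CategoryTheory.Limits

universe w z v u

variable {X : Type u} [Category.{v} X] [HasFiniteCoproducts X]

/-!
Naturality of the laxator in both variables lets one pull `F(i_x)` and `F(𝟙 x)` out of
`μ x x (I_x, a)`, so that `I_x ⊗ₓ a = F(∇_x ∘ (i_x ⨿ 𝟙 x))(μ (⊥, x) (ε ⋆, a))`. Since
`∇_x ∘ (i_x ⨿ 𝟙 x) = [i_x, 𝟙 x]`, this is `a` by the left unit axiom; symmetrically on the right.
-/

lemma Cat.map_id_obj {C : Type*} [Category C] (F : C ⥤ Cat.{w, z}) {x : C} (a : ↑(F.obj x)) :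
    (F.map (𝟙 x)).toFunctor.obj a = a := by
  rw [F.map_id, Cat.Hom.id_obj]

namespace CoprodLaxMonoidalStructure

variable {F : X ⥤ Cat.{w, z}} (L : CoprodLaxMonoidalStructure F)

lemma μ_obj_map_map {x x' y y' : X} (f : x ⟶ x') (g : y ⟶ y') (a : ↑(F.obj x))
    (b : ↑(F.obj y)) :
    (L.μ x' y').obj ((F.map f).toFunctor.obj a, (F.map g).toFunctor.obj b) =
      (F.map (coprod.map f g)).toFunctor.obj ((L.μ x y).obj (a, b)) :=
  Functor.congr_obj (L.naturality f g) (a, b)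

lemma fibTensor_map_map {x y y' : X} (f : y ⟶ x) (g : y' ⟶ x) (a : ↑(F.obj y))
    (b : ↑(F.obj y')) :
    fibTensor F L ((F.map f).toFunctor.obj a) ((F.map g).toFunctor.obj b) =
      (F.map (coprod.desc f g)).toFunctor.obj ((L.μ y y').obj (a, b)) := by
  rw [fibTensor, μ_obj_map_map, ← Cat.Hom.comp_obj, ← F.map_comp, coprod.map_desc,
    Category.comp_id, Category.comp_id]

end CoprodLaxMonoidalStructure

/-- **Strict unitality of the fibrewise tensor product.**
For a functor `F : X ⥤ Cat` from a category with finite coproducts, equipped with a lax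
monoidal structure with respect to the cocartesian monoidal structure on `X` and the cartesian
monoidal structure on `Cat`, the induced tensor product on each fibre is strictly unital:
`I_x ⊗ₓ a = a` and `a ⊗ₓ I_x = a`. -/
theorem fibTensor_unit (F : X ⥤ Cat.{w, z}) (L : CoprodLaxMonoidalStructure F) (x : X)
    (a : ↑(F.obj x)) :
    fibTensor F L (fibUnit F L x) a = a ∧ fibTensor F L a (fibUnit F L x) = a := by
  constructor
  · have h := L.fibTensor_map_map (initial.to x) (𝟙 x) (L.ε.obj ⟨PUnit.unit⟩) a
    rw [Cat.map_id_obj] at h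
    rw [fibUnit, h]
    exact Functor.congr_obj (L.left_unitality x) a
  · have h := L.fibTensor_map_map (𝟙 x) (initial.to x) a (L.ε.obj ⟨PUnit.unit⟩)
    rw [Cat.map_id_obj] at h
    rw [fibUnit, h]
    exact Functor.congr_obj (L.right_unitality x) a
end

section
/- A morphism φ : G ⟶ H in the category of quivers is strongly cartesian with respect to the vertex functor V : Quiv ⥤ Type (i.e. cartesian in the sense of Grothendieck fibrations, lying over its own vertex map) if and only if for all vertices a, b of G, the edge map φ.map : (a ⟶ b) → (φ.obj a ⟶ φ.obj b) is a bijection. -/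
/-!
Once the vertex map `g : K → G` of a prefunctor `χ : K ⥤q G` is fixed, `χ` amounts to a choice of
edge `χ.map e : g x ⟶ g y` for every edge `e : x ⟶ y` of `K`. Lifting `ψ : K ⥤q H` through `φ`
along `g` therefore means choosing, for each edge `e`, a preimage of `ψ.map e` under the edge map
of `φ`; this is possible in exactly one way when the edge maps are bijective. Conversely, edges
`a ⟶ b` are the prefunctors out of the walking edge with vertex map `src ↦ a, tgt ↦ b`, so the
unique lifting property for the walking edge is precisely bijectivity of `φ.map`.
-/

open CategoryTheory

universe v u

/-- The vertex functor `V : Quiv ⥤ Type`, sending a quiver to its type of vertices and a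
prefunctor to its underlying map on vertices. -/
def Quiv.vertexFunctor : Quiv.{v, u} ⥤ Type u where
  obj G := G
  map φ := TypeCat.ofHom φ.obj
  map_id _ := rfl
  map_comp _ _ := rfl

namespace CategoryTheory.Functor

variable {𝒳 𝒮 : Type*} [Category 𝒳] [Category 𝒮] (p : 𝒳 ⥤ 𝒮)

lemma isHomLift_iff_map_eq {a b : 𝒳} (f : p.obj a ⟶ p.obj b) (φ : a ⟶ b) :
    p.IsHomLift f φ ↔ p.map φ = f :=
  ⟨fun _ => (IsHomLift.eq_of_isHomLift p f φ).symm, fun h => h ▸ inferInstance⟩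

lemma isStronglyCartesian_map_iff {a b : 𝒳} (φ : a ⟶ b) :
    p.IsStronglyCartesian (p.map φ) φ ↔ ∀ ⦃a' : 𝒳⦄ (g : p.obj a' ⟶ p.obj a) (φ' : a' ⟶ b),
      p.map φ' = g ≫ p.map φ → ∃! χ : a' ⟶ a, p.map χ = g ∧ χ ≫ φ = φ' := by
  simp only [← isHomLift_iff_map_eq]
  exact ⟨fun h a' g φ' _ => h.universal_property' g φ', fun h => ⟨fun g φ' _ => h g φ' ‹_›⟩⟩

end CategoryTheory.Functor

lemma Prefunctor.existsUnique_lift_of_bijective {U V W : Type*} [Quiver U] [Quiver V] [Quiver W]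
    (φ : V ⥤q W) (hφ : ∀ a b : V, Function.Bijective (fun e : a ⟶ b => φ.map e))
    (g : U → V) (ψ : U ⥤q W) (hψ : ψ.obj = φ.obj ∘ g) :
    ∃! χ : U ⥤q V, χ.obj = g ∧ χ ⋙q φ = ψ := by
  obtain ⟨ψobj, ψmap⟩ := ψ
  subst hψ
  let e a b := Equiv.ofBijective _ (hφ a b)
  refine ⟨⟨g, fun f => (e _ _).symm (ψmap f)⟩, ⟨rfl, ?_⟩, ?_⟩
  · show Prefunctor.mk (φ.obj ∘ g) _ = _
    congr
    funext x y f
    exact (e _ _).apply_symm_apply _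
  · rintro ⟨χobj, χmap⟩ ⟨rfl, hχ⟩
    have hmap := eq_of_heq (Prefunctor.mk.inj hχ).2
    congr
    funext x y f
    exact (e _ _).eq_symm_apply.2 (congrArg (fun m => @m x y f) hmap)

namespace Quiv

lemma vertexFunctor_map_eq_iff {K G : Quiv.{v, u}} (χ : K ⟶ G)
    (g : vertexFunctor.obj K ⟶ vertexFunctor.obj G) :
    vertexFunctor.map χ = g ↔ χ.obj = TypeCat.homEquiv g :=
  TypeCat.homEquiv.injective.eq_iff.symm

lemma isStronglyCartesian_vertexFunctor_map_iff {G H : Quiv.{v, u}} (φ : G ⟶ H) :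
    vertexFunctor.IsStronglyCartesian (vertexFunctor.map φ) φ ↔
      ∀ (K : Quiv.{v, u}) (g : K → G) (ψ : K ⟶ H), ψ.obj = φ.obj ∘ g →
        ∃! χ : K ⟶ G, χ.obj = g ∧ χ ≫ φ = ψ := by
  rw [Functor.isStronglyCartesian_map_iff]
  refine forall_congr' fun K => (TypeCat.homEquiv.forall_congr fun g => forall_congr' fun ψ => ?_)
  simp only [vertexFunctor_map_eq_iff]
  rfl

inductive WalkingEdge : Type u
  | src
  | tgt

namespace WalkingEdge

inductive Hom : WalkingEdge.{u} → WalkingEdge.{u} → Type v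
  | edge : Hom src tgt

instance : Quiver.{v} WalkingEdge.{u} := ⟨Hom⟩

variable {W W' : Type*} [Quiver W] [Quiver W']

def vertexMap (a b : W) : WalkingEdge.{u} → W
  | src => a
  | tgt => b

def prefunctor {a b : W} (f : a ⟶ b) : Prefunctor.{v} WalkingEdge.{u} W where
  obj := vertexMap a b
  map := fun {x y} (e : Hom x y) => match x, y, e with
    | _, _, .edge => f

lemma comp_vertexMap (φ : W ⥤q W') (a b : W) :
    φ.obj ∘ vertexMap a b = vertexMap (φ.obj a) (φ.obj b) := by
  funext x
  cases x <;> rfl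

lemma prefunctor_comp {a b : W} (f : a ⟶ b) (φ : W ⥤q W') :
    prefunctor f ⋙q φ = prefunctor (φ.map f) := by
  refine Prefunctor.ext (fun x => congr_fun (comp_vertexMap φ a b) x) ?_
  rintro _ _ ⟨⟩
  rfl

lemma prefunctor_injective {a b : W} :
    Function.Injective (prefunctor : (a ⟶ b) → _) :=
  fun _ _ h => eq_of_heq (congr_arg_heq (fun χ => χ.map Hom.edge) h)

lemma exists_eq_prefunctor {a b : W} (χ : Prefunctor.{v} WalkingEdge.{u} W)
    (hχ : χ.obj = vertexMap a b) : ∃ f : a ⟶ b, χ = prefunctor f := by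
  obtain ⟨χobj, χmap⟩ := χ
  subst hχ
  refine ⟨χmap .edge, ?_⟩
  congr
  funext x y f
  rcases f with ⟨⟩
  rfl

end WalkingEdge

open WalkingEdge in
lemma bijective_map_of_existsUnique_lift {G H : Quiv.{v, u}} (φ : G ⟶ H)
    (hφ : ∀ (K : Quiv.{v, u}) (g : K → G) (ψ : K ⟶ H), ψ.obj = φ.obj ∘ g →
      ∃! χ : K ⟶ G, χ.obj = g ∧ χ ≫ φ = ψ)
    (a b : G) : Function.Bijective (fun e : a ⟶ b => φ.map e) := by
  have lift (f : φ.obj a ⟶ φ.obj b) := hφ (Quiv.of WalkingEdge) (vertexMap a b) (prefunctor f)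
    (comp_vertexMap φ a b).symm
  constructor
  · intro e e' he
    apply prefunctor_injective
    exact (lift (φ.map e)).unique ⟨rfl, prefunctor_comp e φ⟩
      ⟨rfl, (prefunctor_comp e' φ).trans (congrArg prefunctor he.symm)⟩
  · intro f
    obtain ⟨χ, ⟨hχ, hχφ⟩, -⟩ := lift f
    obtain ⟨e, rfl⟩ := exists_eq_prefunctor χ hχ
    exact ⟨e, prefunctor_injective ((prefunctor_comp e φ).symm.trans hχφ)⟩

end Quiv

/-- **Characterization of strongly cartesian morphisms of quivers over the vertex functor.**
A morphism `φ : G ⟶ H` of quivers is strongly cartesian with respect to the vertex functor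
`V : Quiv ⥤ Type`, lying over its own vertex map, if and only if all of its edge maps
`φ.map : (a ⟶ b) → (φ.obj a ⟶ φ.obj b)` are bijections. -/
theorem Quiv.isStronglyCartesian_iff {G H : Quiv.{v, u}} (φ : G ⟶ H) :
    Quiv.vertexFunctor.IsStronglyCartesian (Quiv.vertexFunctor.map φ) φ ↔
      ∀ a b : G, Function.Bijective (fun e : a ⟶ b => φ.map e) := by
  rw [Quiv.isStronglyCartesian_vertexFunctor_map_iff]
  exact ⟨Quiv.bijective_map_of_existsUnique_lift φ,
    fun hφ _ => Prefunctor.existsUnique_lift_of_bijective φ hφ⟩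
end
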